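/- Let X, Y, Z be real Banach spaces, K ⊆ Y a convex cone with nonempty interior, S ⊆ X a nonempty closed set, C ⊆ Z a proper closed convex cone with C ≠ {0}, f : X → Y, and G : X ⇉ Z with G(x) ≠ ∅ for all x. Let ν(x) = sup_{z ∈ G(x)} dist(z,C), R = S ∩ {x : G(x) ⊆ C}, and x̄ ∈ R. Suppose that (i) f is K-Lipschitz near x̄ with constant ℓ_f and vector e ∈ int K ∩ B(0,1); (ii) G is lower semicontinuous at every point of some ball around x̄ and there exist σ > 0, r > 0 such that the strong slope of ν relative to S at x is at least σ for every x ∈ B(x̄,r) ∩ S with ν(x) > 0. Then for any ℓ ≥ ℓ_f, if x̄ is a locally weakly efficient solution of minimizing f over R, then x̄ is a locally weakly efficient solution of minimizing x ↦ f(x) + ℓσ⁻¹ν(x)e over S: there exists δ > 0 such that there is no x ∈ B(x̄,δ) ∩ S with ν(x) < +∞ and f(x) + ℓσ⁻¹ν(x)e ∈ f(x̄) − int K. -/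

import Mathlib

open Filter Topology Metric Set Pointwise
open scoped ENNReal NNReal

noncomputable section

/-- The `r`-enlargement `B(A,r)` of a set `A`. -/
def enlarge {Z : Type*} [SeminormedAddCommGroup Z] (A : Set Z) (r : ℝ) : Set Z :=
  {z | Metric.infDist z A ≤ r}

/-- Merit function `ν(x) = sup_{z ∈ G(x)} dist(z, C)`, with values in `[0,∞]`. -/
def merit {X Z : Type*} [SeminormedAddCommGroup Z] (G : X → Set Z) (C : Set Z) (x : X) : ℝ≥0∞ :=
  ⨆ z ∈ G x, ENNReal.ofReal (Metric.infDist z C)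

/-- Lower semicontinuity of a set-valued map at a point. -/
def LscAt {X Z : Type*} [TopologicalSpace X] [TopologicalSpace Z] (G : X → Set Z) (x : X) : Prop :=
  ∀ V : Set Z, IsOpen V → (G x ∩ V).Nonempty → ∃ U ∈ nhds x, ∀ u ∈ U, (G u ∩ V).Nonempty

/-- `G` is l.s.c. at every point of some ball around `xb`. -/
def LscAround {X Z : Type*} [SeminormedAddCommGroup X] [TopologicalSpace Z]
    (G : X → Set Z) (xb : X) : Prop :=
  ∃ ρ > 0, ∀ x ∈ Metric.closedBall xb ρ, LscAt G x

/-- `G` is metrically `C`-increasing around `xb` relative to `S`, with witnesses `α > 1`, `δ > 0`. -/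
def MetIncrWith {X Z : Type*} [SeminormedAddCommGroup X] [SeminormedAddCommGroup Z]
    (G : X → Set Z) (S : Set X) (C : Set Z) (xb : X) (α δ : ℝ) : Prop :=
  ∀ x ∈ Metric.closedBall xb δ ∩ S, ∀ r ∈ Set.Ioo (0:ℝ) δ,
    ∃ z ∈ Metric.closedBall x r ∩ S, enlarge (G z) (α * r) ⊆ enlarge (G x + C) r

/-- `G` is metrically `C`-increasing around `xb` relative to `S`. -/
def MetIncr {X Z : Type*} [SeminormedAddCommGroup X] [SeminormedAddCommGroup Z]
    (G : X → Set Z) (S : Set X) (C : Set Z) (xb : X) : Prop :=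
  ∃ α > 1, ∃ δ > 0, MetIncrWith G S C xb α δ

/-- The exact bound of metric `C`-increase of `G` around `xb`, relative to `S`. -/
def incrBound {X Z : Type*} [SeminormedAddCommGroup X] [SeminormedAddCommGroup Z]
    (G : X → Set Z) (S : Set X) (C : Set Z) (xb : X) : ℝ≥0∞ :=
  sSup {a : ℝ≥0∞ | ∃ α : ℝ, a = ENNReal.ofReal α ∧ 1 < α ∧ ∃ δ > 0, MetIncrWith G S C xb α δ}

open Classical in
/-- Strong slope of `φ` relative to `S` at `x`: `0` if `x` is a local minimizer of `φ` on `S`,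
otherwise `inf_{r>0} sup_{z ∈ B(x,r)∩S, z ≠ x} (φ(x) − φ(z))/‖x−z‖`. -/
def strongSlope {X : Type*} [SeminormedAddCommGroup X] (φ : X → ℝ≥0∞) (S : Set X) (x : X) :
    ℝ≥0∞ :=
  if ∃ r > 0, ∀ z ∈ S ∩ Metric.closedBall x r, φ x ≤ φ z then 0
  else ⨅ r ∈ Set.Ioi (0:ℝ), ⨆ z ∈ (S ∩ Metric.closedBall x r) \ {x},
    (φ x - φ z) / ENNReal.ofReal ‖x - z‖

/-- `ψ` is a local error bound function for `R` near `xb`, relative to `S`. -/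
def LocErrBoundFun {X : Type*} [SeminormedAddCommGroup X]
    (ψ : X → ℝ≥0∞) (R S : Set X) (xb : X) : Prop :=
  ∃ δ > 0, (∀ x ∈ Metric.closedBall xb δ ∩ S, ENNReal.ofReal (Metric.infDist x R) ≤ ψ x) ∧
    ∀ x ∈ R, ψ x = ENNReal.ofReal (Metric.infDist x R)

/-- `f` is `K`-Lipschitz near `xb` with constant `ℓ` and vector `e`. -/
def KLipschitzNearWith {X Y : Type*} [SeminormedAddCommGroup X] [SeminormedAddCommGroup Y]
    [NormedSpace ℝ Y] (f : X → Y) (K : Set Y) (xb : X) (ℓ : ℝ) (e : Y) : Prop :=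
  ∃ δ > 0, ∀ x₁ ∈ Metric.closedBall xb δ, ∀ x₂ ∈ Metric.closedBall xb δ,
    f x₁ - f x₂ + (ℓ * ‖x₁ - x₂‖) • e ∈ K

/-- `xb` is a locally weakly efficient solution of minimizing `f` over `R`
(w.r.t. the ordering cone `K`). -/
def LocWeakEffOn {X Y : Type*} [SeminormedAddCommGroup X] [SeminormedAddCommGroup Y]
    (f : X → Y) (R : Set X) (K : Set Y) (xb : X) : Prop :=
  ∃ δ > 0, ∀ x ∈ R ∩ Metric.closedBall xb δ, f xb - f x ∉ interior K

/-- `xb` is a locally efficient solution of minimizing `f` over `R`. -/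
def LocEffOn {X Y : Type*} [SeminormedAddCommGroup X] [SeminormedAddCommGroup Y]
    (f : X → Y) (R : Set X) (K : Set Y) (xb : X) : Prop :=
  ∃ δ > 0, ∀ x ∈ R ∩ Metric.closedBall xb δ, f xb - f x ∈ K → f x = f xb

/-- Contingent (Bouligand tangent) cone to `A` at `xb`. -/
def contingentCone {X : Type*} [SeminormedAddCommGroup X] [NormedSpace ℝ X]
    (A : Set X) (xb : X) : Set X :=
  {v | ∃ (vn : ℕ → X) (tn : ℕ → ℝ), Filter.Tendsto vn Filter.atTop (nhds v) ∧
    Filter.Tendsto tn Filter.atTop (nhds 0) ∧ (∀ n, 0 < tn n) ∧ ∀ n, xb + tn n • vn n ∈ A}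

/-- Feasible direction cone to `A` at `xb`. -/
def feasDirCone {X : Type*} [SeminormedAddCommGroup X] [NormedSpace ℝ X]
    (A : Set X) (xb : X) : Set X :=
  {v | ∃ δ > 0, ∀ t ∈ Set.Ioo (0:ℝ) δ, xb + t • v ∈ A}

/-- Weak feasible direction cone to `A` at `xb`. -/
def weakFeasDirCone {X : Type*} [SeminormedAddCommGroup X] [NormedSpace ℝ X]
    (A : Set X) (xb : X) : Set X :=
  {v | ∀ ε > 0, ∃ t ∈ Set.Ioo (0:ℝ) ε, xb + t • v ∈ A}

/-- Fréchet upper subdifferential of an `[0,∞]`-valued function `φ` (finite at `xb`) at `xb`. -/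
def FUpperSubdiff {X : Type*} [NormedAddCommGroup X] [NormedSpace ℝ X]
    (φ : X → ℝ≥0∞) (xb : X) : Set (X →L[ℝ] ℝ) :=
  {p | ∀ ε > 0, ∃ δ > 0, ∀ x ∈ Metric.ball xb δ, x ≠ xb →
    φ x ≠ ⊤ ∧ (φ x).toReal - (φ xb).toReal - p (x - xb) ≤ ε * ‖x - xb‖}

/-- `d` is the directional derivative of `f` at `xb` in direction `v`. -/
def HasDirDerivAt {X Y : Type*} [SeminormedAddCommGroup X] [NormedSpace ℝ X]
    [SeminormedAddCommGroup Y] [NormedSpace ℝ Y] (f : X → Y) (xb v : X) (d : Y) : Prop :=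
  Filter.Tendsto (fun t : ℝ => t⁻¹ • (f (xb + t • v) - f xb)) (nhdsWithin 0 (Set.Ioi 0)) (nhds d)

/-- `H` is an outer prederivative of `G` at `xb`. -/
def OuterPrederivAt {X Z : Type*} [SeminormedAddCommGroup X] [NormedSpace ℝ X]
    [SeminormedAddCommGroup Z] [NormedSpace ℝ Z] (G H : X → Set Z) (xb : X) : Prop :=
  (∀ t : ℝ, 0 < t → ∀ v, H (t • v) = t • H v) ∧
  ∀ ε > 0, ∃ δ > 0, ∀ x ∈ Metric.closedBall xb δ,
    G x ⊆ G xb + H (x - xb) + Metric.closedBall 0 (ε * ‖x - xb‖)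

/-- `H` is Lipschitz with respect to the Hausdorff distance. -/
def HausLipschitz {X Z : Type*} [SeminormedAddCommGroup X] [SeminormedAddCommGroup Z]
    (H : X → Set Z) : Prop :=
  ∃ l : ℝ, 0 ≤ l ∧ ∀ x₁ x₂ : X,
    EMetric.hausdorffEdist (H x₁) (H x₂) ≤ ENNReal.ofReal (l * ‖x₁ - x₂‖)

/-- `h` is the B-derivative of `f` at `xb`. -/
def IsBDerivAt {X Y : Type*} [NormedAddCommGroup X] [NormedSpace ℝ X]
    [NormedAddCommGroup Y] [NormedSpace ℝ Y] (f : X → Y) (h : X → Y) (xb : X) : Prop :=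
  Continuous h ∧ (∀ t : ℝ, 0 < t → ∀ v, h (t • v) = t • h v) ∧
  Filter.Tendsto (fun x => ‖x - xb‖⁻¹ • (f x - f xb - h (x - xb)))
    (nhdsWithin xb {xb}ᶜ) (nhds 0)

/-- Upper inverse image `H⁺¹(C)` of `C` through `H`. -/
def upperInv {X Z : Type*} (H : X → Set Z) (C : Set Z) : Set X := {x | H x ⊆ C}

end

/-!
Ekeland's variational principle, applied on `S` near `x̄` to the merit function `ν` with a
constant `σ' < σ`, moves any `x` to a point `y` with `ν y + σ'‖y - x‖ ≤ ν x` at which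
`ν + σ'‖· - y‖` has a strict minimum on `S`. The strong slope of `ν` at `y` is then at most
`σ' < σ`, so `ν y = 0`: hence `ν / σ` is a local error bound for `R`.

Suppose `x ∈ S` near `x̄` beats `x̄` for the penalized objective. Comparing `x` with `x̄`
through the `K`-Lipschitz property forces `ν x < σ‖x - x̄‖`, so a feasible `y` with `‖x - y‖`
close to `dist(x, R) ≤ ν x / σ` lies near `x̄`. Since `ℓ ≥ ℓ_f`, the penalty `ℓσ⁻¹ν(x)` pays for
`ℓ_f‖x - y‖` up to an amount absorbed by the openness of `int K`, and `f y ∈ f x̄ - int K`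
contradicts the weak efficiency of `x̄`.
-/

section OrderingCone

variable {Y : Type*} [AddCommGroup Y] [Module ℝ Y] {K : Set Y}

theorem add_mem_of_convex_of_smul_mem (hKconv : Convex ℝ K)
    (hKcone : ∀ t : ℝ, 0 < t → ∀ y ∈ K, t • y ∈ K) {u v : Y} (hu : u ∈ K) (hv : v ∈ K) :
    u + v ∈ K := by
  have h := hKcone 2 two_pos _ (hKconv hu hv (by norm_num : (0 : ℝ) ≤ 1 / 2)
    (by norm_num : (0 : ℝ) ≤ 1 / 2) (by norm_num))
  rwa [smul_add, smul_smul, smul_smul, show (2 : ℝ) * (1 / 2) = 1 by norm_num, one_smul,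
    one_smul] at h

variable [TopologicalSpace Y] [IsTopologicalAddGroup Y]

theorem add_mem_interior_of_convex_of_smul_mem (hKconv : Convex ℝ K)
    (hKcone : ∀ t : ℝ, 0 < t → ∀ y ∈ K, t • y ∈ K) {u v : Y} (hu : u ∈ interior K) (hv : v ∈ K) :
    u + v ∈ interior K :=
  interior_mono
    (add_subset_iff.2 fun _ ha _ hb => add_mem_of_convex_of_smul_mem hKconv hKcone ha hb)
    (subset_interior_add_left (add_mem_add hu hv))

/-- If `a > b + (c + ε) e` strictly and `b + L e ≥ d` in the order of `K`, with `L ≤ c + ε`,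
then `a > d` strictly. -/
theorem sub_mem_interior_trans (hKconv : Convex ℝ K)
    (hKcone : ∀ t : ℝ, 0 < t → ∀ y ∈ K, t • y ∈ K) {a b d e : Y} {c ε L : ℝ} (he : e ∈ K)
    (ha : a - (b + c • e) - ε • e ∈ interior K) (hb : b - d + L • e ∈ K) (hL : L ≤ c + ε) :
    a - d ∈ interior K := by
  have hslack : a - (b + c • e) - ε • e + (c + ε - L) • e ∈ interior K := by
    rcases (sub_nonneg.2 hL).eq_or_lt with h | h
    · rwa [← h, zero_smul, add_zero]
    · exact add_mem_interior_of_convex_of_smul_mem hKconv hKcone ha (hKcone _ h e he)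
  convert add_mem_interior_of_convex_of_smul_mem hKconv hKcone hslack hb using 1
  simp only [sub_smul, add_smul]
  abel

theorem exists_pos_sub_smul_mem [ContinuousSMul ℝ Y] {U : Set Y} (hU : IsOpen U) {w : Y}
    (hw : w ∈ U) (e : Y) : ∃ ε > (0 : ℝ), w - ε • e ∈ U := by
  have h : ∀ᶠ t in 𝓝 (0 : ℝ), w - t • e ∈ U :=
    (by fun_prop : Continuous fun t : ℝ => w - t • e).continuousAt.eventually_mem
      (by simpa using hU.mem_nhds hw)
  obtain ⟨ε, hεU, hε⟩ := ((h.filter_mono nhdsWithin_le_nhds).and self_mem_nhdsWithin).exists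
    (f := 𝓝[>] (0 : ℝ))
  exact ⟨ε, hε, hεU⟩

end OrderingCone

section Ekeland

variable {X : Type*} [MetricSpace X] {A : Set X} {ψ : X → ℝ≥0∞} {σ : ℝ} {x z w : X}

def ekelandSlice (A : Set X) (ψ : X → ℝ≥0∞) (σ : ℝ) (x : X) : Set X :=
  {z | z ∈ A ∧ ψ z + ENNReal.ofReal (σ * dist z x) ≤ ψ x}

theorem self_mem_ekelandSlice (hx : x ∈ A) : x ∈ ekelandSlice A ψ σ x :=
  ⟨hx, by simp⟩

theorem le_of_mem_ekelandSlice (hz : z ∈ ekelandSlice A ψ σ x) : ψ z ≤ ψ x :=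
  le_self_add.trans hz.2

theorem ekelandSlice_subset (hσ : 0 ≤ σ) (hz : z ∈ ekelandSlice A ψ σ x) :
    ekelandSlice A ψ σ z ⊆ ekelandSlice A ψ σ x := by
  intro w hw
  refine ⟨hw.1, ?_⟩
  calc ψ w + ENNReal.ofReal (σ * dist w x)
      ≤ ψ w + (ENNReal.ofReal (σ * dist w z) + ENNReal.ofReal (σ * dist z x)) := by
        rw [← ENNReal.ofReal_add (by positivity) (by positivity), ← mul_add]
        gcongr
        exact dist_triangle w z x
    _ = ψ w + ENNReal.ofReal (σ * dist w z) + ENNReal.ofReal (σ * dist z x) :=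
        (add_assoc _ _ _).symm
    _ ≤ ψ z + ENNReal.ofReal (σ * dist z x) := by gcongr; exact hw.2
    _ ≤ ψ x := hz.2

theorem isClosed_ekelandSlice (hA : IsClosed A) (hψ : LowerSemicontinuousOn ψ A) :
    IsClosed (ekelandSlice A ψ σ x) := by
  have hlsc : LowerSemicontinuousOn (fun z => ψ z + ENNReal.ofReal (σ * dist z x)) A :=
    hψ.add (ENNReal.continuous_ofReal.comp (by fun_prop : Continuous fun z => σ * dist z x)
      |>.lowerSemicontinuous.lowerSemicontinuousOn A)
  obtain ⟨v, hv, hAv⟩ := lowerSemicontinuousOn_iff_preimage_Iic.1 hlsc (ψ x)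
  change IsClosed (A ∩ (fun z => ψ z + ENNReal.ofReal (σ * dist z x)) ⁻¹' Iic (ψ x))
  rw [hAv]
  exact hA.inter hv

theorem exists_mem_ekelandSlice_le_iInf_add (hx : x ∈ A) (hψx : ψ x ≠ ⊤) {ε : ℝ≥0∞}
    (hε : ε ≠ 0) : ∃ z ∈ ekelandSlice A ψ σ x, ψ z ≤ (⨅ v ∈ ekelandSlice A ψ σ x, ψ v) + ε := by
  have hfin : (⨅ v ∈ ekelandSlice A ψ σ x, ψ v) ≠ ⊤ :=
    ne_top_of_le_ne_top hψx (biInf_le _ (self_mem_ekelandSlice hx))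
  obtain ⟨z, hz⟩ := iInf_lt_iff.1 (ENNReal.lt_add_right hfin hε)
  obtain ⟨hzx, hzε⟩ := iInf_lt_iff.1 hz
  exact ⟨z, hzx, hzε.le⟩

theorem dist_le_of_mem_ekelandSlice (hσ : 0 ≤ σ) (hz : z ∈ ekelandSlice A ψ σ x)
    (hψz : ψ z ≠ ⊤) {ε : ℝ} (hε : 0 ≤ ε)
    (hzε : ψ z ≤ (⨅ v ∈ ekelandSlice A ψ σ x, ψ v) + ENNReal.ofReal ε)
    (hw : w ∈ ekelandSlice A ψ σ z) : σ * dist w z ≤ ε := by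
  have hψw : ψ w ≠ ⊤ := ne_top_of_le_ne_top hψz (le_of_mem_ekelandSlice hw)
  have h : ψ w + ENNReal.ofReal (σ * dist w z) ≤ ψ w + ENNReal.ofReal ε :=
    hw.2.trans (hzε.trans (add_le_add_left (biInf_le _ (ekelandSlice_subset hσ hz hw)) _))
  exact (ENNReal.ofReal_le_ofReal_iff hε).1 ((ENNReal.add_le_add_iff_left hψw).1 h)

theorem exists_mem_ekelandSlice_forall_eq [CompleteSpace X] (hA : IsClosed A)
    (hψ : LowerSemicontinuousOn ψ A) (hσ : 0 < σ) (hx : x ∈ A) (hψx : ψ x ≠ ⊤) :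
    ∃ y ∈ ekelandSlice A ψ σ x, ∀ z ∈ ekelandSlice A ψ σ y, z = y := by
  let T := {x | x ∈ A ∧ ψ x ≠ ⊤}
  have step : ∀ (n : ℕ) (x : T), ∃ z : T, z.1 ∈ ekelandSlice A ψ σ x ∧
      ψ z ≤ (⨅ v ∈ ekelandSlice A ψ σ x, ψ v) + ENNReal.ofReal (1 / (n + 1)) := by
    rintro n ⟨x, hx, hψx⟩
    obtain ⟨z, hz, hzε⟩ := exists_mem_ekelandSlice_le_iInf_add (σ := σ) hx hψx
      (ENNReal.ofReal_pos.2 (by positivity : (0 : ℝ) < 1 / (n + 1))).ne'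
    exact ⟨⟨z, hz.1, ne_top_of_le_ne_top hψx (le_of_mem_ekelandSlice hz)⟩, hz, hzε⟩
  choose next hnext using step
  let u : ℕ → T := fun n => Nat.rec ⟨x, hx, hψx⟩ next n
  let s : ℕ → Set X := fun n => ekelandSlice A ψ σ (u (n + 1))
  have hs_anti : Antitone s :=
    antitone_nat_of_succ_le fun n => ekelandSlice_subset hσ.le (hnext (n + 1) (u (n + 1))).1
  have hs_ball : ∀ n : ℕ, s n ⊆ closedBall (u (n + 1)) (1 / (n + 1) / σ) := fun n w hw => by
    rw [mem_closedBall, le_div_iff₀ hσ, mul_comm]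
    exact dist_le_of_mem_ekelandSlice hσ.le (hnext n (u n)).1 (u (n + 1)).2.2 (by positivity)
      (hnext n (u n)).2 hw
  have hs_bdd : ∀ n, Bornology.IsBounded (s n) := fun n => isBounded_closedBall.subset (hs_ball n)
  have hdiam : Tendsto (fun n => diam (s n)) atTop (𝓝 0) := by
    have h : Tendsto (fun n : ℕ => 2 * (1 / ((n : ℝ) + 1) / σ)) atTop (𝓝 0) := by
      simpa using (tendsto_one_div_add_atTop_nhds_zero_nat.div_const σ).const_mul 2
    exact squeeze_zero (fun n => diam_nonneg)
      (fun n => diam_le_of_subset_closedBall (by positivity) (hs_ball n)) h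
  obtain ⟨y, hy⟩ := nonempty_iInter_of_nonempty_biInter (fun n => isClosed_ekelandSlice hA hψ)
    hs_bdd (fun N => ⟨u (N + 1), mem_iInter₂.2 fun n hn =>
      hs_anti hn (self_mem_ekelandSlice (u (N + 1)).2.1)⟩) hdiam
  rw [mem_iInter] at hy
  refine ⟨y, ekelandSlice_subset hσ.le (hnext 0 (u 0)).1 (hy 0), fun z hz => ?_⟩
  have hzs : ∀ n, z ∈ s n := fun n => ekelandSlice_subset hσ.le (hy n) hz
  exact dist_le_zero.1
    (ge_of_tendsto' hdiam fun n => dist_le_diam_of_mem (hs_bdd n) (hzs n) (hy n))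

end Ekeland

section StrongSlope

variable {X : Type*} [NormedAddCommGroup X] {φ : X → ℝ≥0∞} {S : Set X}

theorem strongSlope_le_of_le_add {y : X} {r c : ℝ} (hr : 0 < r) (hc : 0 ≤ c)
    (h : ∀ z ∈ S ∩ closedBall y r, φ y ≤ φ z + ENNReal.ofReal (c * ‖z - y‖)) :
    strongSlope φ S y ≤ ENNReal.ofReal c := by
  unfold strongSlope
  split_ifs
  · exact bot_le
  refine (biInf_le _ (mem_Ioi.2 hr)).trans (iSup₂_le fun z hz => ?_)
  have hyz : ENNReal.ofReal ‖y - z‖ ≠ 0 := by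
    simpa [sub_eq_zero] using Ne.symm hz.2
  rw [ENNReal.div_le_iff_le_mul (Or.inl hyz) (Or.inl ENNReal.ofReal_ne_top), tsub_le_iff_right,
    ← ENNReal.ofReal_mul hc, norm_sub_rev, add_comm]
  exact h z hz.1

variable [CompleteSpace X]

theorem exists_zero_of_strongSlope_ge {xb x : X} {ρ σ σ' : ℝ} (hS : IsClosed S)
    (hφ : LowerSemicontinuousOn φ (closedBall xb ρ ∩ S))
    (hslope : ∀ y ∈ closedBall xb ρ ∩ S, φ y ≠ 0 → ENNReal.ofReal σ ≤ strongSlope φ S y)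
    (hσ' : 0 < σ') (hσ'σ : σ' < σ) (hx : x ∈ S) (hφx : φ x ≠ ⊤)
    (hxρ : ‖x - xb‖ + (φ x).toReal / σ' < ρ) :
    ∃ y ∈ S, φ y = 0 ∧ σ' * ‖y - x‖ ≤ (φ x).toReal := by
  have hxA : x ∈ closedBall xb ρ ∩ S := by
    refine ⟨?_, hx⟩
    rw [mem_closedBall, dist_eq_norm]
    linarith [div_nonneg (φ x).toReal_nonneg hσ'.le]
  obtain ⟨y, ⟨hyA, hyslice⟩, hmin⟩ :=
    exists_mem_ekelandSlice_forall_eq (isClosed_closedBall.inter hS) hφ hσ' hxA hφx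
  have hyx : σ' * ‖y - x‖ ≤ (φ x).toReal := by
    rw [← dist_eq_norm]
    exact (ENNReal.ofReal_le_iff_le_toReal hφx).1 (le_add_self.trans hyslice)
  refine ⟨y, hyA.2, ?_, hyx⟩
  by_contra hy0
  have hyρ : ‖y - xb‖ < ρ := by
    have hyx' : ‖y - x‖ ≤ (φ x).toReal / σ' := by rw [le_div_iff₀ hσ', mul_comm]; exact hyx
    linarith [norm_sub_le_norm_sub_add_norm_sub y x xb]
  have hslope_le : strongSlope φ S y ≤ ENNReal.ofReal σ' := by
    refine strongSlope_le_of_le_add (sub_pos.2 hyρ) hσ'.le fun z ⟨hzS, hzy⟩ => ?_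
    by_cases hz : z = y
    · simp [hz]
    have hzA : z ∈ closedBall xb ρ ∩ S :=
      ⟨closedBall_subset_closedBall' (by rw [dist_eq_norm]; linarith) hzy, hzS⟩
    exact le_of_not_gt fun h => hz (hmin z ⟨hzA, by rw [dist_eq_norm]; exact h.le⟩)
  have := (hslope y hyA hy0).trans hslope_le
  rw [ENNReal.ofReal_le_ofReal_iff hσ'.le] at this
  linarith

theorem locErrBoundFun_of_strongSlope_ge {xb : X} {ρ σ : ℝ} (hS : IsClosed S) (hρ : 0 < ρ)
    (hσ : 0 < σ) (hxbS : xb ∈ S) (hxb : φ xb = 0)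
    (hφ : LowerSemicontinuousOn φ (closedBall xb ρ ∩ S))
    (hslope : ∀ y ∈ closedBall xb ρ ∩ S, φ y ≠ 0 → ENNReal.ofReal σ ≤ strongSlope φ S y) :
    LocErrBoundFun (fun x => φ x / ENNReal.ofReal σ) {x | x ∈ S ∧ φ x = 0} S xb := by
  refine ⟨ρ / 4, by positivity, fun x ⟨hxδ, hxS⟩ => ?_,
    fun x hx => by simp [hx.2, infDist_zero_of_mem hx]⟩
  rcases eq_or_ne (φ x) ⊤ with hφx | hφx
  · simp [hφx, ENNReal.top_div_of_ne_top]
  dsimp only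
  rw [← ENNReal.ofReal_toReal hφx, ← ENNReal.ofReal_div_of_pos hσ]
  apply ENNReal.ofReal_le_ofReal
  set m := (φ x).toReal
  rw [mem_closedBall, dist_eq_norm] at hxδ
  rcases le_or_gt (ρ / 4) (m / σ) with hm | hm
  · calc infDist x {x | x ∈ S ∧ φ x = 0} ≤ dist x xb := infDist_le_dist_of_mem ⟨hxbS, hxb⟩
      _ ≤ m / σ := by rw [dist_eq_norm]; linarith
  have hlim : Tendsto (fun σ' => m / σ') (𝓝[<] σ) (𝓝 (m / σ)) :=
    (tendsto_const_nhds.div tendsto_id hσ.ne').mono_left nhdsWithin_le_nhds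
  refine ge_of_tendsto hlim ?_
  filter_upwards [Ioo_mem_nhdsLT (half_lt_self hσ)] with σ' ⟨hσ'₁, hσ'₂⟩
  have hσ' : 0 < σ' := by linarith
  have hmσ' : m / σ' ≤ 2 * (m / σ) := by
    rw [div_le_iff₀ hσ', mul_comm, ← mul_assoc, mul_div_assoc', le_div_iff₀ hσ]
    nlinarith [ENNReal.toReal_nonneg (a := φ x)]
  obtain ⟨y, hyS, hy0, hyx⟩ :=
    exists_zero_of_strongSlope_ge hS hφ hslope hσ' hσ'₂ hxS hφx (by linarith)
  calc infDist x {x | x ∈ S ∧ φ x = 0} ≤ dist x y := infDist_le_dist_of_mem ⟨hyS, hy0⟩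
    _ ≤ m / σ' := by rw [dist_comm, dist_eq_norm, le_div_iff₀ hσ', mul_comm]; exact hyx

end StrongSlope

section Merit

variable {X Z : Type*} [SeminormedAddCommGroup Z] {G : X → Set Z} {C : Set Z}

theorem merit_eq_zero_iff (hC : IsClosed C) (hCne : C.Nonempty) {x : X} :
    merit G C x = 0 ↔ G x ⊆ C := by
  simp [merit, hC.mem_iff_infDist_zero hCne, subset_def, infDist_nonneg.ge_iff_eq']

theorem lowerSemicontinuousAt_merit [TopologicalSpace X] {x : X} (hG : LscAt G x) :
    LowerSemicontinuousAt (merit G C) x := by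
  intro c hc
  obtain ⟨z, hzG, hzc⟩ : ∃ z ∈ G x, c < ENNReal.ofReal (infDist z C) := by
    simpa [merit, lt_iSup_iff] using hc
  obtain ⟨U, hU, hUV⟩ := hG {z | c < ENNReal.ofReal (infDist z C)}
    (isOpen_lt continuous_const (ENNReal.continuous_ofReal.comp (continuous_infDist_pt C)))
    ⟨z, hzG, hzc⟩
  filter_upwards [hU] with u hu
  obtain ⟨z', hz'G, hz'c⟩ := hUV u hu
  exact hz'c.trans_le (le_iSup₂ (f := fun z _ => ENNReal.ofReal (infDist z C)) z' hz'G)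

end Merit

theorem LocWeakEffOn.exists_exact_penalty {X Y : Type*} [NormedAddCommGroup X]
    [NormedAddCommGroup Y] [NormedSpace ℝ Y] {f : X → Y} {K : Set Y} {R S : Set X}
    {ν : X → ℝ≥0∞} {xb : X} {e : Y} {ℓf ℓ σ : ℝ} (hweff : LocWeakEffOn f R K xb) (hxbR : xb ∈ R)
    (hKconv : Convex ℝ K) (hKcone : ∀ t : ℝ, 0 < t → ∀ y ∈ K, t • y ∈ K) (he : e ∈ K)
    (hℓf : 0 < ℓf) (hℓ : ℓf ≤ ℓ) (hσ : 0 < σ) (hLip : KLipschitzNearWith f K xb ℓf e)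
    (herr : LocErrBoundFun (fun x => ν x / ENNReal.ofReal σ) R S xb) :
    ∃ δ > 0, ∀ x ∈ closedBall xb δ ∩ S, ν x ≠ ⊤ →
      f xb - (f x + (ℓ / σ * (ν x).toReal) • e) ∉ interior K := by
  obtain ⟨δw, hδw, hweff⟩ := hweff
  obtain ⟨δL, hδL, hLip⟩ := hLip
  obtain ⟨δe, hδe, herr, -⟩ := herr
  set δ := min δw (min δL δe)
  have hδ : 0 < δ := lt_min hδw (lt_min hδL hδe)
  have hball : ∀ {y : X}, ‖y - xb‖ ≤ δ →
      y ∈ closedBall xb δw ∧ y ∈ closedBall xb δL ∧ y ∈ closedBall xb δe := fun hy => by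
    simp only [mem_closedBall, dist_eq_norm]
    exact ⟨hy.trans (min_le_left _ _), hy.trans ((min_le_right _ _).trans (min_le_left _ _)),
      hy.trans ((min_le_right _ _).trans (min_le_right _ _))⟩
  refine ⟨δ / 3, by positivity, fun x ⟨hxδ, hxS⟩ hνx hmem => ?_⟩
  rw [mem_closedBall, dist_eq_norm] at hxδ
  have hx := hball (y := x) (by linarith)
  have hxb := hball (y := xb) (by simp [hδ.le])
  set m := (ν x).toReal
  -- otherwise comparing `x` with `xb` itself would put `0` in `interior K`
  have hmx : m / σ < ‖x - xb‖ := by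
    by_contra! h
    have hL : ℓf * ‖x - xb‖ ≤ ℓ / σ * m + 0 :=
      calc ℓf * ‖x - xb‖ ≤ ℓ * (m / σ) := mul_le_mul hℓ h (norm_nonneg _) (hℓf.le.trans hℓ)
        _ = ℓ / σ * m + 0 := by ring
    have h0 := sub_mem_interior_trans hKconv hKcone he (by simpa using hmem)
      (hLip x hx.2.1 xb hxb.2.1) hL
    exact hweff xb ⟨hxbR, hxb.1⟩ h0
  obtain ⟨ε, hε, hεmem⟩ := exists_pos_sub_smul_mem isOpen_interior hmem e
  have hdist : infDist x R ≤ m / σ := by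
    have h : ENNReal.ofReal (infDist x R) ≤ ν x / ENNReal.ofReal σ := herr x ⟨hx.2.2, hxS⟩
    rwa [← ENNReal.ofReal_toReal hνx, ← ENNReal.ofReal_div_of_pos hσ,
      ENNReal.ofReal_le_ofReal_iff (by positivity)] at h
  obtain ⟨y, hyR, hxy⟩ := (infDist_lt_iff ⟨xb, hxbR⟩).1 (hdist.trans_lt
    (lt_add_of_pos_right _ (lt_min (div_pos hε hℓf) (div_pos hδ three_pos))))
  rw [dist_eq_norm] at hxy
  have hy := hball (y := y) (by
    linarith [norm_sub_le_norm_sub_add_norm_sub y x xb, norm_sub_rev x y,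
      min_le_right (ε / ℓf) (δ / 3)])
  refine hweff y ⟨hyR, hy.1⟩ (sub_mem_interior_trans hKconv hKcone he hεmem
    (hLip x hx.2.1 y hy.2.1) ?_)
  calc ℓf * ‖x - y‖ ≤ ℓf * (m / σ + ε / ℓf) := by
        gcongr
        linarith [min_le_left (ε / ℓf) (δ / 3)]
    _ = ℓf * (m / σ) + ε := by field_simp
    _ ≤ ℓ * (m / σ) + ε := by gcongr
    _ = ℓ / σ * m + ε := by ring

theorem statement_3_general
    {X Y Z : Type*} [NormedAddCommGroup X] [CompleteSpace X]
    [NormedAddCommGroup Y] [NormedSpace ℝ Y]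
    [NormedAddCommGroup Z]
    (K : Set Y) (hKconv : Convex ℝ K)
    (hKcone : ∀ t : ℝ, 0 < t → ∀ y ∈ K, t • y ∈ K)
    (S : Set X) (hScl : IsClosed S)
    (C : Set Z) (hCcl : IsClosed C) (hC0 : (0:Z) ∈ C)
    (f : X → Y) (G : X → Set Z)
    (xb : X) (hxbS : xb ∈ S) (hxbG : G xb ⊆ C)
    (ℓf : ℝ) (hℓf : 0 < ℓf) (e : Y) (he : e ∈ interior K)
    (hLip : KLipschitzNearWith f K xb ℓf e)
    (hlsc : LscAround G xb)
    (σ r : ℝ) (hσ : 0 < σ) (hr : 0 < r)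
    (hslope : ∀ x ∈ Metric.closedBall xb r ∩ S, merit G C x ≠ 0 →
      ENNReal.ofReal σ ≤ strongSlope (merit G C) S x)
    (ℓ : ℝ) (hℓ : ℓf ≤ ℓ)
    (hweff : LocWeakEffOn f (S ∩ {x | G x ⊆ C}) K xb) :
    ∃ δ > 0, ∀ x ∈ Metric.closedBall xb δ ∩ S, merit G C x ≠ ⊤ →
      f xb - (f x + (ℓ / σ * (merit G C x).toReal) • e) ∉ interior K := by
  obtain ⟨ρ, hρ, hlsc⟩ := hlsc
  have hball : closedBall xb (min ρ r) ⊆ closedBall xb ρ ∩ closedBall xb r :=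
    subset_inter (closedBall_subset_closedBall (min_le_left _ _))
      (closedBall_subset_closedBall (min_le_right _ _))
  have hzero : ∀ x, merit G C x = 0 ↔ G x ⊆ C := fun x => merit_eq_zero_iff hCcl ⟨0, hC0⟩
  have herr : LocErrBoundFun (fun x => merit G C x / ENNReal.ofReal σ)
      {x | x ∈ S ∧ merit G C x = 0} S xb :=
    locErrBoundFun_of_strongSlope_ge hScl (lt_min hρ hr) hσ hxbS ((hzero xb).2 hxbG)
      (fun x hx =>
        (lowerSemicontinuousAt_merit (hlsc x (hball hx.1).1)).lowerSemicontinuousWithinAt _)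
      (fun x hx => hslope x ⟨(hball hx.1).2, hx.2⟩)
  simp only [hzero] at herr
  exact hweff.exists_exact_penalty ⟨hxbS, hxbG⟩ hKconv hKcone (interior_subset he) hℓf hℓ hσ
    hLip herr

/-- penalization of a vector problem with set-valued inclusion constraints,
weak efficiency case. -/
theorem statement_3
    {X Y Z : Type*} [NormedAddCommGroup X] [NormedSpace ℝ X] [CompleteSpace X]
    [NormedAddCommGroup Y] [NormedSpace ℝ Y] [CompleteSpace Y]
    [NormedAddCommGroup Z] [NormedSpace ℝ Z] [CompleteSpace Z]
    (K : Set Y) (hKconv : Convex ℝ K)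
    (hKcone : ∀ t : ℝ, 0 < t → ∀ y ∈ K, t • y ∈ K) (hKint : (interior K).Nonempty)
    (S : Set X) (hSne : S.Nonempty) (hScl : IsClosed S)
    (C : Set Z) (hCcl : IsClosed C) (hCconv : Convex ℝ C)
    (hCcone : ∀ t : ℝ, 0 < t → ∀ z ∈ C, t • z ∈ C) (hC0 : (0:Z) ∈ C)
    (hCne0 : C ≠ {0}) (hCneuniv : C ≠ Set.univ)
    (f : X → Y) (G : X → Set Z) (hG : ∀ x, (G x).Nonempty)
    (xb : X) (hxbS : xb ∈ S) (hxbG : G xb ⊆ C)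
    (ℓf : ℝ) (hℓf : 0 < ℓf) (e : Y) (he : e ∈ interior K) (hnorme : ‖e‖ ≤ 1)
    (hLip : KLipschitzNearWith f K xb ℓf e)
    (hlsc : LscAround G xb)
    (σ r : ℝ) (hσ : 0 < σ) (hr : 0 < r)
    (hslope : ∀ x ∈ Metric.closedBall xb r ∩ S, merit G C x ≠ 0 →
      ENNReal.ofReal σ ≤ strongSlope (merit G C) S x)
    (ℓ : ℝ) (hℓ : ℓf ≤ ℓ)
    (hweff : LocWeakEffOn f (S ∩ {x | G x ⊆ C}) K xb) :
    ∃ δ > 0, ∀ x ∈ Metric.closedBall xb δ ∩ S, merit G C x ≠ ⊤ →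
      f xb - (f x + (ℓ / σ * (merit G C x).toReal) • e) ∉ interior K :=
  statement_3_general K hKconv hKcone S hScl C hCcl hC0 f G xb hxbS hxbG ℓf hℓf e he hLip hlsc σ r
    hσ hr hslope ℓ hℓ hweff
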